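/- For all fixed nonnegative integers a and b, the quantity Σ(n,a,b) := ∑_{j=1}^{b} (κ_{j+a−1} + κ_{n−j−a}) · (b − 1 + κ_{j−1} + κ_{b−j} − κ_b) converges, as n → ∞, to Λ(a,b) := ∑_{j=1}^{b} κ_{j+a−1} · (b − 1 + κ_{j−1} + κ_{b−j} − κ_b). -/

import Mathlib

open Finset Filter Topology

/-- The `n`-th harmonic number `H_n = ∑_{i=1}^n 1/i`. -/
noncomputable def H (n : ℕ) : ℝ := ∑ i ∈ Finset.range n, (1 : ℝ) / (i + 1)

/-- `κ_n = 2(n+1)H_n - 4n`, the mean number of key comparisons for QuickSort on `n` keys. -/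
noncomputable def κ (n : ℕ) : ℝ := 2 * (n + 1) * H n - 4 * n

/-!
Write `w_j = b - 1 + κ_{j-1} + κ_{b-j} - κ_b`. The weights are symmetric under `j ↦ b + 1 - j`,
and the identity `2 ∑_{k<b} κ_k = b κ_b - b(b-1)` makes them sum to zero; by symmetry the
first moment `∑_j (b - j) w_j` vanishes as well. Since `κ` has second differences `2/(m+2) → 0`,
`κ_{m+k} = κ_m + k (κ_{m+1} - κ_m) + o(1)` for each fixed `k`, so with `m = n - a - b` the
`n`-dependent part `∑_j κ_{m + (b - j)} w_j` is killed by the two vanishing moments up to `o(1)`.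
-/

section AsymptoticallyAffine

variable {E : Type*} [AddCommGroup E] [TopologicalSpace E] [IsTopologicalAddGroup E]

theorem tendsto_sub_add_of_tendsto_succ_sub {g : ℕ → E}
    (hg : Tendsto (fun m => g (m + 1) - g m) atTop (𝓝 0)) (k : ℕ) :
    Tendsto (fun m => g (m + k) - g m) atTop (𝓝 0) := by
  induction k with
  | zero => simpa using tendsto_const_nhds
  | succ k ih =>
    have hstep := hg.comp (tendsto_add_atTop_nat k)
    simpa [Function.comp_def, add_assoc] using hstep.add ih

theorem tendsto_sub_affine_of_tendsto_second_diff {f : ℕ → E}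
    (hf : Tendsto (fun m => f (m + 2) - 2 • f (m + 1) + f m) atTop (𝓝 0)) (k : ℕ) :
    Tendsto (fun m => f (m + k) - f m - k • (f (m + 1) - f m)) atTop (𝓝 0) := by
  have hdiff := tendsto_sub_add_of_tendsto_succ_sub (g := fun m => f (m + 1) - f m)
    (hf.congr fun m => by rw [two_nsmul]; abel)
  induction k with
  | zero => simpa using tendsto_const_nhds
  | succ k ih =>
    have hsum := ih.add (hdiff k)
    rw [add_zero] at hsum
    refine hsum.congr fun m => ?_
    simp only [← add_assoc, succ_nsmul]
    abel

end AsymptoticallyAffine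

theorem tendsto_sum_shift_mul_of_moments_eq_zero {R ι : Type*} [CommRing R] [TopologicalSpace R]
    [IsTopologicalRing R] {f : ℕ → R}
    (hf : ∀ k : ℕ, Tendsto (fun m => f (m + k) - f m - k • (f (m + 1) - f m)) atTop (𝓝 0))
    (s : Finset ι) (d : ι → ℕ) (w : ι → R)
    (hw₀ : ∑ i ∈ s, w i = 0) (hw₁ : ∑ i ∈ s, (d i : R) * w i = 0) :
    Tendsto (fun m => ∑ i ∈ s, f (m + d i) * w i) atTop (𝓝 0) := by
  have hdecomp : ∀ m, ∑ i ∈ s, f (m + d i) * w i =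
      ∑ i ∈ s, (f (m + d i) - f m - d i • (f (m + 1) - f m)) * w i := fun m => by
    have hexpand : ∑ i ∈ s, (f (m + d i) - f m - d i • (f (m + 1) - f m)) * w i =
        ∑ i ∈ s, f (m + d i) * w i - f m * ∑ i ∈ s, w i
          - (f (m + 1) - f m) * ∑ i ∈ s, (d i : R) * w i := by
      simp only [mul_sum, ← sum_sub_distrib, nsmul_eq_mul]
      exact sum_congr rfl fun i _ => by ring
    rw [hexpand, hw₀, hw₁]
    ring
  simp only [hdecomp]
  simpa using tendsto_finsetSum s fun i _ => (hf (d i)).mul_const (w i)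

theorem H_succ (m : ℕ) : H (m + 1) = H m + 1 / (m + 1) := by
  simp [H, sum_range_succ]

theorem κ_succ_sub (m : ℕ) : κ (m + 1) - κ m = 2 * H (m + 1) - 2 := by
  have hm : (m : ℝ) + 1 ≠ 0 := by positivity
  simp only [κ, H_succ]
  push_cast
  field_simp
  ring

theorem κ_second_diff (m : ℕ) : κ (m + 2) - 2 • κ (m + 1) + κ m = 2 / ((m : ℝ) + 2) := by
  have h₁ := κ_succ_sub m
  have h₂ : κ (m + 2) - κ (m + 1) = 2 * H (m + 2) - 2 := κ_succ_sub (m + 1)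
  have hH : H (m + 2) = H (m + 1) + 1 / ((m : ℝ) + 2) := by
    rw [H_succ (m + 1)]
    push_cast
    ring
  rw [two_nsmul, div_eq_mul_one_div]
  linarith

theorem tendsto_κ_second_diff :
    Tendsto (fun m => κ (m + 2) - 2 • κ (m + 1) + κ m) atTop (𝓝 0) := by
  simp only [κ_second_diff]
  exact tendsto_const_nhds.div_atTop (tendsto_atTop_add_const_right _ _ tendsto_natCast_atTop_atTop)

theorem succ_mul_κ_succ (b : ℕ) : (b + 1 : ℝ) * κ (b + 1) = (b + 2) * κ b + 2 * b := by
  have hb : (b : ℝ) + 1 ≠ 0 := by positivity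
  simp only [κ, H_succ]
  push_cast
  field_simp
  ring

theorem two_mul_sum_range_κ (b : ℕ) :
    2 * ∑ k ∈ range b, κ k = b * κ b - b * (b - 1) := by
  induction b with
  | zero => simp
  | succ b ih =>
    rw [sum_range_succ]
    push_cast
    linarith [succ_mul_κ_succ b]

noncomputable def κWeight (b j : ℕ) : ℝ := (b : ℝ) - 1 + κ (j - 1) + κ (b - j) - κ b

theorem sum_Icc_one_eq_sum_range {M : Type*} [AddCommMonoid M] (f : ℕ → M) (b : ℕ) :
    ∑ j ∈ Icc 1 b, f j = ∑ k ∈ range b, f (k + 1) := by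
  rw [← Ico_add_one_right_eq_Icc, sum_Ico_eq_sum_range]
  simp [add_comm]

theorem κWeight_succ (b k : ℕ) :
    κWeight b (k + 1) = (b : ℝ) - 1 + κ k + κ (b - 1 - k) - κ b := by
  simp [κWeight, Nat.sub_sub, add_comm]

theorem sum_κWeight (b : ℕ) : ∑ j ∈ Icc 1 b, κWeight b j = 0 := by
  have hreflect := sum_range_reflect κ b
  have htwo := two_mul_sum_range_κ b
  rw [sum_Icc_one_eq_sum_range]
  simp only [κWeight_succ, sum_add_distrib, sum_sub_distrib, hreflect, sum_const, card_range,
    nsmul_eq_mul]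
  linarith

theorem sum_range_reflect_mul_eq_zero {v : ℕ → ℝ} {b : ℕ} (hsymm : ∀ k < b, v (b - 1 - k) = v k)
    (hv : ∑ k ∈ range b, v k = 0) : ∑ k ∈ range b, ((b - 1 - k : ℕ) : ℝ) * v k = 0 := by
  have hreflect : ∑ k ∈ range b, ((b - 1 - k : ℕ) : ℝ) * v k = ∑ k ∈ range b, (k : ℝ) * v k := by
    rw [← sum_range_reflect]
    refine sum_congr rfl fun k hk => ?_
    have hk := mem_range.mp hk
    rw [hsymm k hk, show b - 1 - (b - 1 - k) = k by omega]
  have hmoments : ∑ k ∈ range b, (((b - 1 - k : ℕ) : ℝ) + k) * v k = 0 := by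
    rw [← mul_zero ((b - 1 : ℕ) : ℝ), ← hv, mul_sum]
    refine sum_congr rfl fun k hk => ?_
    rw [← Nat.cast_add, show b - 1 - k + k = b - 1 by have := mem_range.mp hk; omega]
  simp only [add_mul, sum_add_distrib, ← hreflect] at hmoments
  linarith

theorem sum_sub_mul_κWeight (b : ℕ) : ∑ j ∈ Icc 1 b, ((b - j : ℕ) : ℝ) * κWeight b j = 0 := by
  have hsymm : ∀ k < b, κWeight b (b - 1 - k + 1) = κWeight b (k + 1) := fun k hk => by
    simp only [κWeight_succ, show b - 1 - (b - 1 - k) = k by omega]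
    ring
  have hv := sum_κWeight b
  rw [sum_Icc_one_eq_sum_range] at hv ⊢
  simpa only [Nat.sub_sub, add_comm 1] using sum_range_reflect_mul_eq_zero hsymm hv

theorem tendsto_sum_κ_sub_mul_κWeight (a b : ℕ) :
    Tendsto (fun n => ∑ j ∈ Icc 1 b, κ (n - j - a) * κWeight b j) atTop (𝓝 0) := by
  have hshift := (tendsto_sum_shift_mul_of_moments_eq_zero
    (tendsto_sub_affine_of_tendsto_second_diff tendsto_κ_second_diff) (Icc 1 b) (b - ·)
    (κWeight b) (sum_κWeight b) (sum_sub_mul_κWeight b)).comp (tendsto_sub_atTop_nat (a + b))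
  refine hshift.congr' ?_
  filter_upwards [eventually_ge_atTop (a + b)] with n hn
  exact sum_congr rfl fun j hj => by
    have := mem_Icc.mp hj
    dsimp only [Function.comp_apply]
    congr 2
    omega

theorem sigma_tendsto_lambda (a b : ℕ) :
    Filter.Tendsto
      (fun n : ℕ => ∑ j ∈ Finset.Icc 1 b,
        (κ (j + a - 1) + κ (n - j - a)) *
          ((b : ℝ) - 1 + κ (j - 1) + κ (b - j) - κ b))
      Filter.atTop
      (𝓝 (∑ j ∈ Finset.Icc 1 b,
        κ (j + a - 1) * ((b : ℝ) - 1 + κ (j - 1) + κ (b - j) - κ b))) := by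
  have hlim := (tendsto_sum_κ_sub_mul_κWeight a b).const_add
    (∑ j ∈ Icc 1 b, κ (j + a - 1) * κWeight b j)
  rw [add_zero] at hlim
  refine hlim.congr fun n => ?_
  simp only [κWeight, add_mul, sum_add_distrib]
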